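/- arXiv:2202.07961 — 5 statements merged into one kernel-verified Lean document; each statement's English description precedes it below -/
import Mathlib

section
/- Let a_1,…,a_k be pairwise coprime positive integers and d_1,…,d_k positive integers such that, for each i, the polynomial X^{d_i} − a_i is irreducible over ℚ, and let d = lcm(d_1,…,d_k). Let f ∈ ℤ[x_1,…,x_k]. Suppose there exist a rational prime p with p ≡ 1 (mod d) and p not dividing any a_i, and elements ᾱ_1,…,ᾱ_k ∈ F_p with ᾱ_i^{d_i} = a_i in F_p for all i, such that f̄(ᾱ_1,…,ᾱ_k) ≠ 0 in F_p, where f̄ is the coefficientwise reduction of f modulo p. Then f(d_1√a_1, …, d_k√a_k) ≠ 0. -/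
/-!
Reducing the exponents of `f` modulo `dᵢ` writes `f(β) = ∑ᵥ cᵥ βᵛ` (`0 ≤ vᵢ < dᵢ`) with integers
`cᵥ` independent of `β`, for every `β` in any commutative ring with `βᵢ ^ dᵢ = aᵢ`. Over `ℝ`, with
`rᵢ = ᵈⁱ√aᵢ`, the monomials `rᵛ` are linearly independent over `ℚ`: some power `(rᵛ) ^ N` is
rational, and the ratio of two distinct monomials is irrational: otherwise comparing `q`-adic
valuations at the primes `q ∣ aᵢ` makes `aᵢ` an `m`-th power for some `m ∣ dᵢ`, `m ≠ 1`, which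
irreducibility of `X ^ dᵢ - aᵢ` forbids. A positive irrational `x` with `x ^ N ∈ ℚ` has minimal
polynomial `X ^ e - c` with `e ≥ 2`, hence trace zero in every number field `L ⊆ ℝ` containing it,
so taking the trace of a relation `∑ cᵥ rᵛ / rʷ = 0` leaves only `cʷ`. Hence `f(r) = 0` forces every `cᵥ = 0`, and then `f̄(ᾱ) = ∑ c̄ᵥ ᾱᵛ = 0`.
-/

open Polynomial

theorem isIntegral_of_pow_eq_ratCast {x : ℝ} {N : ℕ} (hN : N ≠ 0) {q : ℚ} (hxq : x ^ N = q) :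
    IsIntegral ℚ x :=
  ⟨_, monic_X_pow_sub_C q hN, by simp [hxq]⟩

theorem minpoly_eq_X_pow_sub_C_of_pow_eq_ratCast {x : ℝ} (hx : 0 < x) {N : ℕ} (hN : N ≠ 0)
    {q : ℚ} (hxq : x ^ N = q) :
    ∃ c : ℚ, minpoly ℚ x = X ^ (minpoly ℚ x).natDegree - C c := by
  set g := minpoly ℚ x
  have hxN : aeval x (X ^ N - C q) = 0 := by simp [hxq]
  have hint := isIntegral_of_pow_eq_ratCast hN hxq
  have hg : g.Monic := minpoly.monic hint
  set G := g.map (algebraMap ℚ ℂ)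
  have hG : G.Splits := IsAlgClosed.splits G
  -- Every complex root `z` of `g` has `z ^ N = q`, so `‖z‖ = x`; hence `|g 0| = x ^ deg g`.
  have hroot : ∀ z ∈ G.roots, ‖z‖ = x := by
    intro z hz
    have hzN : z ^ N = q := by
      have hdvd : G ∣ (X ^ N - C q).map (algebraMap ℚ ℂ) :=
        Polynomial.map_dvd _ (minpoly.dvd ℚ x hxN)
      have := eval_eq_zero_of_dvd_of_eval_eq_zero hdvd ((mem_roots (hg.map _).ne_zero).mp hz)
      simpa [sub_eq_zero] using this
    have : ‖z‖ ^ N = x ^ N := by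
      rw [← norm_pow, hzN, hxq, Complex.norm_ratCast, abs_of_nonneg]
      exact_mod_cast hxq ▸ (pow_pos hx N).le
    exact (pow_left_inj₀ (norm_nonneg z) hx.le hN).mp this
  have hcoeff : |(g.coeff 0 : ℝ)| = x ^ g.natDegree := by
    have := congrArg norm (hG.coeff_zero_eq_prod_roots_of_monic (hg.map _))
    have hprod : ‖G.roots.prod‖ = x ^ G.roots.card := by
      have hnorm := map_multiset_prod (normHom : ℂ →*₀ ℝ) G.roots
      simp only [normHom_apply] at hnorm
      rw [hnorm, Multiset.map_congr rfl hroot, Multiset.map_const', Multiset.prod_replicate]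
    rw [coeff_map, norm_mul, norm_pow, norm_neg, norm_one, one_pow, one_mul, hprod,
      ← hG.natDegree_eq_card_roots, natDegree_map, eq_ratCast, Complex.norm_ratCast] at this
    exact_mod_cast this
  refine ⟨|g.coeff 0|, (eq_of_monic_of_dvd_of_natDegree_le hg ?_ (minpoly.dvd ℚ x ?_) ?_).symm⟩
  · exact monic_X_pow_sub_C _ (minpoly.natDegree_pos hint).ne'
  · simp [← hcoeff]
  · rw [natDegree_X_pow_sub_C]

theorem minpoly_nextCoeff_eq_zero_of_pow_eq_ratCast {x : ℝ} (hx : 0 < x) {N : ℕ} (hN : N ≠ 0)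
    {q : ℚ} (hxq : x ^ N = q) (hirr : Irrational x) : (minpoly ℚ x).nextCoeff = 0 := by
  obtain ⟨c, hc⟩ := minpoly_eq_X_pow_sub_C_of_pow_eq_ratCast hx hN hxq
  have h2 : 2 ≤ (minpoly ℚ x).natDegree :=
    (minpoly.two_le_natDegree_iff (isIntegral_of_pow_eq_ratCast hN hxq)).mpr hirr
  rw [hc, nextCoeff_of_natDegree_pos (by rw [natDegree_X_pow_sub_C]; omega), natDegree_X_pow_sub_C,
    coeff_sub, coeff_X_pow, coeff_C, if_neg (by omega), if_neg (by omega), sub_zero]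

theorem linearIndependent_of_pow_eq_ratCast {ι : Type*} [Fintype ι] {y : ι → ℝ}
    (hy : ∀ i, 0 < y i) {N : ℕ} (hN : N ≠ 0) (hyN : ∀ i, ∃ q : ℚ, y i ^ N = q)
    (hratio : ∀ i j, i ≠ j → Irrational (y i / y j)) : LinearIndependent ℚ y := by
  classical
  let L := IntermediateField.adjoin ℚ (Set.range y)
  have : FiniteDimensional ℚ L := IntermediateField.finiteDimensional_adjoin <| by
    rintro _ ⟨i, rfl⟩
    obtain ⟨q, hq⟩ := hyN i
    exact isIntegral_of_pow_eq_ratCast hN hq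
  let Y : ι → L := fun i => ⟨y i, IntermediateField.subset_adjoin _ _ ⟨i, rfl⟩⟩
  suffices LinearIndependent ℚ Y from
    this.map' L.val.toLinearMap (LinearMap.ker_eq_bot.mpr L.val.injective)
  rw [Fintype.linearIndependent_iff]
  intro g hg j
  -- Dividing the relation by `Y j` and taking the trace to `ℚ` leaves only the `j`-th term.
  have hYj : Y j ≠ 0 := fun h => (hy j).ne' (congrArg Subtype.val h)
  have htrace : ∀ i, Algebra.trace ℚ L (Y i / Y j) = if i = j then Module.finrank ℚ L else 0 := by
    intro i
    split_ifs with hij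
    · subst hij
      rw [div_self hYj, ← map_one (algebraMap ℚ L), Algebra.trace_algebraMap, nsmul_one]
    · obtain ⟨qi, hqi⟩ := hyN i
      obtain ⟨qj, hqj⟩ := hyN j
      rw [trace_eq_finrank_mul_minpoly_nextCoeff, ← minpoly.algebraMap_eq L.val.injective]
      change _ * -(minpoly ℚ (y i / y j)).nextCoeff = 0
      rw [minpoly_nextCoeff_eq_zero_of_pow_eq_ratCast (div_pos (hy i) (hy j)) hN (q := qi / qj)
        (by rw [div_pow, hqi, hqj, Rat.cast_div]) (hratio i j hij), neg_zero, mul_zero]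
  have := congrArg (fun z => Algebra.trace ℚ L (z / Y j)) hg
  simp only [Finset.sum_div, map_sum, smul_div_assoc, map_smul, htrace] at this
  simpa [Module.finrank_pos.ne'] using this

theorem Nat.exists_pow_eq_of_dvd_factorization {a m : ℕ} (ha : a ≠ 0)
    (h : ∀ q, m ∣ a.factorization q) : ∃ s : ℕ, s ^ m = a := by
  refine ⟨a.factorization.prod fun q e => q ^ (e / m), ?_⟩
  conv_rhs => rw [← Nat.prod_factorization_pow_eq_self ha]
  rw [Finsupp.prod, Finsupp.prod, ← Finset.prod_pow]
  exact Finset.prod_congr rfl fun q _ => by rw [← pow_mul, Nat.div_mul_cancel (h q)]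

theorem dvd_of_dvd_mul_factorization_of_irreducible {a d u : ℕ} (ha : a ≠ 0)
    (hirr : Irreducible (X ^ d - C (a : ℚ))) (h : ∀ q, d ∣ u * a.factorization q) : d ∣ u := by
  by_contra hu
  set g := Nat.gcd u d
  have hg : 0 < g := Nat.gcd_pos_of_pos_left _ (Nat.pos_of_ne_zero (by rintro rfl; simp at hu))
  have hdiv (q : ℕ) : d / g ∣ a.factorization q := by
    refine (Nat.coprime_div_gcd_div_gcd hg).symm.dvd_of_dvd_mul_left ?_
    have := Nat.div_dvd_div (Nat.gcd_dvd_right u d) (h q)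
    rwa [← Nat.div_mul_right_comm (Nat.gcd_dvd_left u d)] at this
  obtain ⟨s, hs⟩ := Nat.exists_pow_eq_of_dvd_factorization ha hdiv
  refine pow_ne_of_irreducible_X_pow_sub_C hirr (Nat.div_dvd_of_dvd (Nat.gcd_dvd_right u d))
    (fun h1 => hu ?_) s (by exact_mod_cast hs)
  rw [← Nat.eq_of_dvd_of_div_eq_one (Nat.gcd_dvd_right u d) h1]
  exact Nat.gcd_dvd_left u d

theorem Nat.factorization_prod_pow_of_dvd {ι : Type*} [Fintype ι] {a : ι → ℕ}
    (ha : ∀ i, a i ≠ 0) (hcop : Pairwise fun i j => Nat.Coprime (a i) (a j)) {q : ℕ}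
    (hq : q.Prime) {i₀ : ι} (hqa : q ∣ a i₀) (e : ι → ℕ) :
    (∏ i, a i ^ e i).factorization q = e i₀ * (a i₀).factorization q := by
  rw [Nat.factorization_prod fun i _ => pow_ne_zero _ (ha i), Finset.sum_apply',
    Finset.sum_eq_single_of_mem i₀ (Finset.mem_univ _), Nat.factorization_pow, Finsupp.smul_apply,
    smul_eq_mul]
  intro i _ hi
  rw [Nat.factorization_pow, Finsupp.smul_apply, Nat.factorization_eq_zero_of_not_dvd, smul_zero]
  exact fun hqi => hq.ne_one (Nat.eq_one_of_dvd_coprimes (hcop hi) hqi hqa)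

theorem prod_pow_pow_eq_of_pow_eq {ι R : Type*} [Fintype ι] [CommMonoid R] {r b : ι → R}
    {d : ι → ℕ} (hr : ∀ i, r i ^ d i = b i) {N : ℕ} (hN : ∀ i, d i ∣ N) (e : ι → ℕ) :
    (∏ i, r i ^ e i) ^ N = ∏ i, b i ^ (e i * (N / d i)) := by
  rw [← Finset.prod_pow]
  refine Finset.prod_congr rfl fun i _ => ?_
  rw [← pow_mul, ← hr i, ← pow_mul, mul_left_comm, Nat.mul_div_cancel' (hN i)]

theorem irrational_prod_pow_div_prod_pow {ι : Type*} [Fintype ι] {a d : ι → ℕ} {r : ι → ℝ}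
    (ha : ∀ i, 0 < a i) (hcop : Pairwise fun i j => Nat.Coprime (a i) (a j))
    (hirr : ∀ i, Irreducible (X ^ d i - C (a i : ℚ))) (hr : ∀ i, r i ^ d i = a i)
    {v w : ∀ i, Fin (d i)} (hvw : v ≠ w) :
    Irrational ((∏ i, r i ^ (v i : ℕ)) / ∏ i, r i ^ (w i : ℕ)) := by
  rintro ⟨s, hs⟩
  obtain ⟨i₀, hi₀⟩ := Function.ne_iff.mp hvw
  set N := ∏ i, d i
  have hdN (i : ι) : d i ∣ N := Finset.dvd_prod_of_mem d (Finset.mem_univ i)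
  have hN : N ≠ 0 := Finset.prod_ne_zero_iff.mpr fun i _ => (Fin.pos (v i)).ne'
  let A (e : ∀ i, Fin (d i)) : ℕ := ∏ i, a i ^ ((e i : ℕ) * (N / d i))
  have hA (e : ∀ i, Fin (d i)) : (∏ i, r i ^ (e i : ℕ)) ^ N = A e := by
    push_cast [A]
    exact prod_pow_pow_eq_of_pow_eq hr hdN _
  have hA0 (e : ∀ i, Fin (d i)) : A e ≠ 0 :=
    Finset.prod_ne_zero_iff.mpr fun i _ => pow_ne_zero _ (ha i).ne'
  have hsA : (A v : ℚ) = s ^ N * A w := by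
    have : (A v : ℝ) = (s : ℝ) ^ N * A w := by
      rw [hs, div_pow, hA, hA, div_mul_cancel₀ _ (by exact_mod_cast hA0 w)]
    exact_mod_cast this
  have hs0 : s ≠ 0 := by
    rintro rfl
    simp [hA0 v, hN] at hsA
  -- At a prime `q ∣ a i₀` only the `i₀`-th factors of `A v` and `A w` have positive valuation.
  have hval (q : ℕ) : d i₀ ∣ ((v i₀ : ℤ) - w i₀).natAbs * (a i₀).factorization q := by
    by_cases hf : (a i₀).factorization q = 0
    · simp [hf]
    obtain ⟨hq, hqa⟩ : q.Prime ∧ q ∣ a i₀ := by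
      simpa [Nat.factorization_eq_zero_iff, (ha i₀).ne'] using hf
    have := Fact.mk hq
    have hpad := congrArg (padicValRat q) hsA
    rw [padicValRat.mul (pow_ne_zero _ hs0) (by exact_mod_cast hA0 w), padicValRat.pow,
      padicValRat.of_nat, padicValRat.of_nat, ← Nat.factorization_def _ hq,
      ← Nat.factorization_def _ hq,
      Nat.factorization_prod_pow_of_dvd (fun i => (ha i).ne') hcop hq hqa,
      Nat.factorization_prod_pow_of_dvd (fun i => (ha i).ne') hcop hq hqa] at hpad
    have hZ : (d i₀ : ℤ) ∣ ((v i₀ : ℤ) - w i₀) * (a i₀).factorization q := by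
      refine ⟨padicValRat q s, ?_⟩
      obtain ⟨t, hNt⟩ := hdN i₀
      have ht : (t : ℤ) ≠ 0 := by exact_mod_cast right_ne_zero_of_mul (hNt ▸ hN)
      rw [hNt, Nat.mul_div_cancel_left _ (Fin.pos (v i₀))] at hpad
      apply mul_left_cancel₀ ht
      push_cast at hpad
      linear_combination hpad
    simpa [Int.natAbs_mul] using Int.natAbs_dvd_natAbs.mpr hZ
  have := Nat.le_of_dvd (by omega)
    (dvd_of_dvd_mul_factorization_of_irreducible (ha i₀).ne' (hirr i₀) hval)
  omega

theorem linearIndependent_prod_pow {ι : Type*} [Fintype ι] [DecidableEq ι] {a d : ι → ℕ}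
    {r : ι → ℝ} (ha : ∀ i, 0 < a i) (hcop : Pairwise fun i j => Nat.Coprime (a i) (a j))
    (hirr : ∀ i, Irreducible (X ^ d i - C (a i : ℚ))) (hr_pos : ∀ i, 0 < r i)
    (hr : ∀ i, r i ^ d i = a i) :
    LinearIndependent ℚ fun v : (∀ i, Fin (d i)) => ∏ i, r i ^ (v i : ℕ) := by
  have hd (i : ι) : d i ≠ 0 := by
    simpa only [natDegree_X_pow_sub_C] using (hirr i).natDegree_pos.ne'
  refine linearIndependent_of_pow_eq_ratCast (N := ∏ i, d i)
    (fun v => Finset.prod_pos fun i _ => pow_pos (hr_pos i) _)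
    (Finset.prod_ne_zero_iff.mpr fun i _ => hd i)
    (fun v => ⟨∏ i, (a i : ℚ) ^ ((v i : ℕ) * ((∏ i, d i) / d i)), ?_⟩)
    (fun v w hvw => irrational_prod_pow_div_prod_pow ha hcop hirr hr hvw)
  rw [prod_pow_pow_eq_of_pow_eq hr (fun i => Finset.dvd_prod_of_mem d (Finset.mem_univ i))]
  push_cast
  rfl

section ReducedCoeff

variable {σ : Type*} [Fintype σ] [DecidableEq σ] (a d : σ → ℕ) (hd : ∀ i, 0 < d i)

def expResidue (e : σ →₀ ℕ) : ∀ i, Fin (d i) := fun i => ⟨e i % d i, Nat.mod_lt _ (hd i)⟩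

/-- The coefficient of `xᵛ` in the reduction of `f` modulo the relations `xᵢ ^ dᵢ = aᵢ`. -/
def reducedCoeff (f : MvPolynomial σ ℤ) (v : ∀ i, Fin (d i)) : ℤ :=
  ∑ e ∈ f.support with expResidue d hd e = v, f.coeff e * ∏ i, (a i : ℤ) ^ (e i / d i)

variable {a d}

theorem aeval_eq_sum_reducedCoeff {R : Type*} [CommRing R] {β : σ → R}
    (hβ : ∀ i, β i ^ d i = a i) (f : MvPolynomial σ ℤ) :
    MvPolynomial.aeval β f = ∑ v, (reducedCoeff a d hd f v : R) * ∏ i, β i ^ (v i : ℕ) := by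
  classical
  rw [MvPolynomial.aeval_def, MvPolynomial.eval₂_eq',
    ← Finset.sum_fiberwise_of_maps_to (g := expResidue d hd) (fun e _ => Finset.mem_univ _)]
  refine Finset.sum_congr rfl fun v _ => ?_
  rw [reducedCoeff, Int.cast_sum, Finset.sum_mul]
  refine Finset.sum_congr rfl fun e he => ?_
  have hres (i : σ) : e i % d i = v i := congrArg Fin.val (congrFun (Finset.mem_filter.mp he).2 i)
  have hpow (i : σ) : β i ^ e i = (a i : R) ^ (e i / d i) * β i ^ (v i : ℕ) := by
    rw [← hres, ← hβ, ← pow_mul, ← pow_add, Nat.div_add_mod]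
  simp only [hpow, Finset.prod_mul_distrib, eq_intCast]
  push_cast
  ring

theorem reducedCoeff_eq_zero_of_aeval_eq_zero (ha : ∀ i, 0 < a i)
    (hcop : Pairwise fun i j => Nat.Coprime (a i) (a j))
    (hirr : ∀ i, Irreducible (X ^ d i - C (a i : ℚ))) {r : σ → ℝ} (hr_pos : ∀ i, 0 < r i)
    (hr : ∀ i, r i ^ d i = a i) {f : MvPolynomial σ ℤ} (hf : MvPolynomial.aeval r f = 0)
    (v : ∀ i, Fin (d i)) : reducedCoeff a d hd f v = 0 := by
  rw [aeval_eq_sum_reducedCoeff hd hr] at hf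
  have := Fintype.linearIndependent_iff.mp (linearIndependent_prod_pow ha hcop hirr hr_pos hr)
    (fun v => reducedCoeff a d hd f v) (by simpa [Rat.smul_def] using hf) v
  exact_mod_cast this

end ReducedCoeff

theorem nonzero_of_nonzero_mod_p_general
    (k : ℕ) (a d : Fin k → ℕ)
    (ha : ∀ i, 0 < a i) (hd : ∀ i, 0 < d i)
    (hcop : ∀ i j, i ≠ j → Nat.Coprime (a i) (a j))
    (hirr : ∀ i, Irreducible (X ^ (d i) - C ((a i : ℚ))))
    (f : MvPolynomial (Fin k) ℤ)
    (p : ℕ)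
    (α : Fin k → ZMod p) (hα : ∀ i, α i ^ (d i) = ((a i : ℕ) : ZMod p))
    (hne : MvPolynomial.eval α (MvPolynomial.map (Int.castRingHom (ZMod p)) f) ≠ 0) :
    MvPolynomial.aeval (fun i : Fin k => (a i : ℝ) ^ ((d i : ℝ)⁻¹)) f ≠ 0 := by
  intro hf
  have hr (i : Fin k) : ((a i : ℝ) ^ ((d i : ℝ)⁻¹)) ^ d i = a i :=
    Real.rpow_inv_natCast_pow (Nat.cast_nonneg _) (hd i).ne'
  have hcoeff := reducedCoeff_eq_zero_of_aeval_eq_zero hd ha hcop hirr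
    (fun i => Real.rpow_pos_of_pos (Nat.cast_pos.mpr (ha i)) _) hr hf
  apply hne
  rw [MvPolynomial.eval_map, Subsingleton.elim (Int.castRingHom _) (algebraMap ℤ _),
    ← MvPolynomial.aeval_def, aeval_eq_sum_reducedCoeff hd hα]
  simp [hcoeff]

/-- If there is a prime `p ≡ 1 (mod lcm(d₁,…,d_k))` dividing no `aᵢ`
and elements `ᾱᵢ ∈ 𝔽_p` with `ᾱᵢ ^ dᵢ = aᵢ` such that the reduction
`f̄(ᾱ₁,…,ᾱ_k) ≠ 0` in `𝔽_p`, then `f(ᵈ¹√a₁, …, ᵈᵏ√a_k) ≠ 0`. -/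
theorem nonzero_of_nonzero_mod_p
    (k : ℕ) (a d : Fin k → ℕ)
    (ha : ∀ i, 0 < a i) (hd : ∀ i, 0 < d i)
    (hcop : ∀ i j, i ≠ j → Nat.Coprime (a i) (a j))
    (hirr : ∀ i, Irreducible (X ^ (d i) - C ((a i : ℚ))))
    (D : ℕ) (hD : D = Finset.univ.lcm d)
    (f : MvPolynomial (Fin k) ℤ)
    (p : ℕ) [Fact p.Prime]
    (hpd : p % D = 1)
    (hpa : ∀ i, ¬ (p ∣ a i))
    (α : Fin k → ZMod p) (hα : ∀ i, α i ^ (d i) = ((a i : ℕ) : ZMod p))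
    (hne : MvPolynomial.eval α (MvPolynomial.map (Int.castRingHom (ZMod p)) f) ≠ 0) :
    MvPolynomial.aeval (fun i : Fin k => (a i : ℝ) ^ ((d i : ℝ)⁻¹)) f ≠ 0 :=
  nonzero_of_nonzero_mod_p_general k a d ha hd hcop hirr f p α hα hne
end

section
/- Let s ≥ 4 be an integer, let k ≤ s, let a_1,…,a_k be pairwise coprime positive integers and d_1,…,d_k positive integers, all of magnitude at most 2^s, such that for each i the polynomial X^{d_i} − a_i is irreducible over ℚ; let K ⊆ ℂ be the splitting field of ∏_{i=1}^k (X^{d_i} − a_i) over ℚ. Let f ∈ ℤ[x_1,…,x_k] have total degree at most 2^s and all coefficients of absolute value at most 2^{2^s}, and set α = f(d_1√a_1, …, d_k√a_k) ∈ K. Then the field norm satisfies |N_{K/ℚ}(α)| ≤ 2^{2^{s^3}}. -/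
/-!
The norm of `α` is the product of its conjugates `σ α` over the embeddings `σ : K → ℂ`. Each
conjugate is `f` evaluated at conjugates of the radicals, which are roots of `X ^ dᵢ - aᵢ` and so
have absolute value at most `2 ^ s`; hence `|σ α| ≤ (2 ^ s + 1) ^ k · 2 ^ 2 ^ s · (2 ^ s) ^ 2 ^ s`.
Every root of `X ^ dᵢ - aᵢ` is a fixed root times a power of a primitive `L`-th root of unity
`ζ`, `L = ∏ dᵢ`, so `K ⊆ ℚ(ζ, ᵈ¹√a₁, …, ᵈᵏ√aₖ)` and `[K : ℚ] ≤ L ^ 2 ≤ 2 ^ (2 s ^ 2)`.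
-/

open Polynomial IntermediateField Module Finset

namespace MvPolynomial

variable {σ : Type*} [Fintype σ]

theorem card_support_le_of_totalDegree_le {R : Type*} [CommSemiring R] {p : MvPolynomial σ R}
    {D : ℕ} (hp : p.totalDegree ≤ D) : #p.support ≤ (D + 1) ^ Fintype.card σ := by
  classical
  have hmaps : ∀ m ∈ p.support, ⇑m ∈ Fintype.piFinset fun _ : σ => range (D + 1) :=
    fun m hm => Fintype.mem_piFinset.2 fun i => mem_range_succ_iff.2 <|
      (m.le_degree i).trans ((le_totalDegree hm).trans hp)
  calc #p.support ≤ #(Fintype.piFinset fun _ : σ => range (D + 1)) :=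
        card_le_card_of_injOn _ hmaps DFunLike.coe_injective.injOn
    _ = (D + 1) ^ Fintype.card σ := by simp

theorem norm_aeval_le {p : MvPolynomial σ ℤ} {D : ℕ} {H : ℤ} {B : ℝ} (g : σ → ℂ)
    (hdeg : p.totalDegree ≤ D) (hcoeff : ∀ m, |p.coeff m| ≤ H) (hB : 1 ≤ B)
    (hg : ∀ i, ‖g i‖ ≤ B) :
    ‖aeval g p‖ ≤ (D + 1) ^ Fintype.card σ * (H * B ^ D) := by
  have hterm : ∀ m ∈ p.support, ‖((p.coeff m : ℤ) : ℂ) * ∏ i, g i ^ m i‖ ≤ H * B ^ D := by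
    intro m hm
    have hmonomial : ‖∏ i, g i ^ m i‖ ≤ B ^ D :=
      calc ‖∏ i, g i ^ m i‖ = ∏ i, ‖g i‖ ^ m i := by simp only [norm_prod, norm_pow]
        _ ≤ ∏ i, B ^ m i := by gcongr with i; exact hg i
        _ = B ^ m.degree := by rw [prod_pow_eq_pow_sum, Finsupp.degree_eq_sum]
        _ ≤ B ^ D := pow_le_pow_right₀ hB ((le_totalDegree hm).trans hdeg)
    rw [norm_mul, Complex.norm_intCast]
    gcongr
    · exact_mod_cast (abs_nonneg _).trans (hcoeff m)
    · exact_mod_cast hcoeff m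
  rw [aeval_def, eval₂_eq']
  calc ‖∑ m ∈ p.support, algebraMap ℤ ℂ (p.coeff m) * ∏ i, g i ^ m i‖
      ≤ ∑ m ∈ p.support, (H * B ^ D : ℝ) := norm_sum_le_of_le _ hterm
    _ = #p.support * (H * B ^ D) := by rw [sum_const, nsmul_eq_mul]
    _ ≤ (D + 1) ^ Fintype.card σ * (H * B ^ D) := by
      have hH : (0 : ℝ) ≤ H := mod_cast (abs_nonneg _).trans (hcoeff 0)
      have hBD : 0 ≤ B ^ D := pow_nonneg (zero_le_one.trans hB) D
      gcongr
      exact_mod_cast card_support_le_of_totalDegree_le hdeg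

end MvPolynomial

theorem norm_le_max_one_of_pow_eq {𝕜 : Type*} [NormedDivisionRing 𝕜] {z w : 𝕜} {n : ℕ}
    (hn : n ≠ 0) (h : z ^ n = w) : ‖z‖ ≤ max 1 ‖w‖ := by
  rcases le_or_gt ‖z‖ 1 with hz | hz
  · exact hz.trans (le_max_left _ _)
  · calc ‖z‖ ≤ ‖z‖ ^ n := le_self_pow₀ hz.le hn
      _ = ‖w‖ := by rw [← norm_pow, h]
      _ ≤ max 1 ‖w‖ := le_max_right _ _

theorem AlgHom.norm_apply_le_of_pow_eq {K : Type*} [Field K] [Algebra ℚ K] (σ : K →ₐ[ℚ] ℂ)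
    {y : K} {n : ℕ} {c : ℚ} (hn : n ≠ 0) (h : y ^ n = algebraMap ℚ K c) :
    ‖σ y‖ ≤ max 1 |(c : ℝ)| := by
  refine (norm_le_max_one_of_pow_eq hn (w := (c : ℂ)) ?_).trans_eq ?_
  · rw [← map_pow, h, AlgHom.commutes, eq_ratCast]
  · rw [Complex.norm_ratCast]

theorem IntermediateField.algHom_apply_eq_aeval {K : IntermediateField ℚ ℂ} {ι : Type*}
    {f : MvPolynomial ι ℤ} {r : ι → ℂ} (hrK : ∀ i, r i ∈ K) {x : K}
    (hx : (x : ℂ) = MvPolynomial.aeval r f) (σ : K →ₐ[ℚ] ℂ) :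
    σ x = MvPolynomial.aeval (fun i => σ ⟨r i, hrK i⟩) f := by
  have hxr : x = MvPolynomial.aeval (fun i => (⟨r i, hrK i⟩ : K)) f := by
    apply Subtype.coe_injective
    change (x : ℂ) = algebraMap K ℂ (MvPolynomial.aeval (fun i => (⟨r i, hrK i⟩ : K)) f)
    rw [hx, ← MvPolynomial.aeval_algebraMap_apply]
    rfl
  rw [hxr]
  exact MvPolynomial.comp_aeval_apply _ (σ.restrictScalars ℤ) f

theorem abs_norm_le_pow_finrank {K : Type*} [Field K] [Algebra ℚ K] [FiniteDimensional ℚ K]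
    {x : K} {C : ℝ} (hC : ∀ σ : K →ₐ[ℚ] ℂ, ‖σ x‖ ≤ C) :
    |(Algebra.norm ℚ x : ℝ)| ≤ C ^ finrank ℚ K := by
  have hnorm : |(Algebra.norm ℚ x : ℝ)| = ∏ σ : K →ₐ[ℚ] ℂ, ‖σ x‖ := by
    rw [← norm_prod, ← Algebra.norm_eq_prod_embeddings, eq_ratCast, Complex.norm_ratCast]
  rw [hnorm, ← AlgHom.card ℚ K ℂ, ← Finset.card_univ, ← prod_const]
  exact prod_le_prod (fun _ _ => norm_nonneg _) fun σ _ => hC σ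

theorem mem_rootSet_prod_X_pow_sub_C_iff {F E ι : Type*} [Field F] [Field E] [Algebra F E]
    [Fintype ι] {d : ι → ℕ} {c : ι → F} (hd : ∀ i, d i ≠ 0) {z : E} :
    z ∈ (∏ i, (X ^ d i - C (c i))).rootSet E ↔ ∃ i, z ^ d i = algebraMap F E (c i) := by
  rw [mem_rootSet, and_iff_right (monic_prod_of_monic _ _ fun i _ =>
    monic_X_pow_sub_C _ (hd i)).ne_zero]
  simp only [map_prod, map_sub, map_pow, aeval_X, aeval_C, prod_eq_zero_iff, mem_univ, true_and,
    sub_eq_zero]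

theorem IntermediateField.finrank_biSup_le_prod {F E ι : Type*} [Field F] [Field E] [Algebra F E]
    (t : ι → IntermediateField F E) (s : Finset ι) :
    finrank F ↥(⨆ i ∈ s, t i) ≤ ∏ i ∈ s, finrank F (t i) := by
  classical
  induction s using Finset.induction with
  | empty =>
    rw [show (⨆ i ∈ (∅ : Finset ι), t i) = ⊥ by simp, IntermediateField.finrank_bot, prod_empty]
  | insert i s hi ih =>
    rw [Finset.iSup_insert, prod_insert hi]
    exact (finrank_sup_le _ _).trans (Nat.mul_le_mul_left _ ih)

section XPowSubC

variable {F E : Type*} [Field F] [Field E] [Algebra F E] {z : E} {n : ℕ} {c : F}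

theorem aeval_X_pow_sub_C_eq_zero_of_pow_eq (h : z ^ n = algebraMap F E c) :
    aeval z (X ^ n - C c) = 0 := by
  simp [h]

theorem isIntegral_of_pow_eq (hn : n ≠ 0) (h : z ^ n = algebraMap F E c) : IsIntegral F z :=
  IsAlgebraic.isIntegral
    ⟨_, (monic_X_pow_sub_C c hn).ne_zero, aeval_X_pow_sub_C_eq_zero_of_pow_eq h⟩

theorem finrank_adjoin_simple_le_of_pow_eq (hn : n ≠ 0) (h : z ^ n = algebraMap F E c) :
    finrank F F⟮z⟯ ≤ n := by
  rw [adjoin.finrank (isIntegral_of_pow_eq hn h), ← natDegree_X_pow_sub_C (n := n) (r := c)]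
  exact natDegree_le_natDegree (minpoly.min F z (monic_X_pow_sub_C c hn)
    (aeval_X_pow_sub_C_eq_zero_of_pow_eq h))

end XPowSubC

theorem finrank_adjoin_rootSet_prod_X_pow_sub_C_le {ι : Type*} [Fintype ι] {d : ι → ℕ}
    {c : ι → ℚ} (hd : ∀ i, d i ≠ 0) (hc : ∀ i, c i ≠ 0) :
    finrank ℚ (adjoin ℚ ((∏ i, (X ^ d i - C (c i))).rootSet ℂ)) ≤ (∏ i, d i) ^ 2 := by
  classical
  set L := ∏ i, d i
  have hL : L ≠ 0 := prod_ne_zero_iff.2 fun i _ => hd i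
  choose r hr using fun i =>
    IsAlgClosed.exists_pow_nat_eq (algebraMap ℚ ℂ (c i)) (Nat.pos_of_ne_zero (hd i))
  have hc0 : ∀ i, algebraMap ℚ ℂ (c i) ≠ 0 := fun i => (_root_.map_ne_zero _).2 (hc i)
  have hr0 : ∀ i, r i ≠ 0 := fun i h0 => hc0 i <| by rw [← hr i, h0, zero_pow (hd i)]
  have : NeZero L := ⟨hL⟩
  obtain ⟨ζ, hζ⟩ : ∃ ζ : ℂ, IsPrimitiveRoot ζ L := ⟨_, Complex.isPrimitiveRoot_exp L hL⟩
  have hζL : ζ ^ L = algebraMap ℚ ℂ 1 := by rw [hζ.pow_eq_one, map_one]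
  set T := ℚ⟮ζ⟯ ⊔ ⨆ i ∈ univ, ℚ⟮r i⟯
  have hζT : ζ ∈ T := le_sup_left (a := ℚ⟮ζ⟯) (mem_adjoin_simple_self ℚ ζ)
  have hrT : ∀ i, r i ∈ T := fun i =>
    ((le_iSup₂ (f := fun i (_ : i ∈ univ) => ℚ⟮r i⟯) i (mem_univ i)).trans le_sup_right)
      (mem_adjoin_simple_self ℚ (r i))
  have hle : adjoin ℚ ((∏ i, (X ^ d i - C (c i))).rootSet ℂ) ≤ T := by
    refine adjoin_le_iff.2 fun z hz => ?_
    obtain ⟨i, hzi⟩ := (mem_rootSet_prod_X_pow_sub_C_iff hd).1 hz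
    have hunit : (z / r i) ^ L = 1 := by
      obtain ⟨e, he⟩ : d i ∣ L := dvd_prod_of_mem d (mem_univ i)
      rw [he, pow_mul, div_pow, hzi, hr i, div_self (hc0 i), one_pow]
    obtain ⟨j, -, hj⟩ := hζ.eq_pow_of_pow_eq_one hunit
    rw [← div_mul_cancel₀ z (hr0 i), ← hj]
    exact mul_mem (pow_mem hζT j) (hrT i)
  have hζfin : FiniteDimensional ℚ ℚ⟮ζ⟯ := adjoin.finiteDimensional (isIntegral_of_pow_eq hL hζL)
  have hrfin : ∀ i, FiniteDimensional ℚ ℚ⟮r i⟯ :=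
    fun i => adjoin.finiteDimensional (isIntegral_of_pow_eq (hd i) (hr i))
  have : FiniteDimensional ℚ ↥(⨆ i ∈ univ, ℚ⟮r i⟯) :=
    finiteDimensional_iSup_of_finset' fun i _ => hrfin i
  calc _ ≤ finrank ℚ T := finrank_le_of_le_right hle
    _ ≤ finrank ℚ ℚ⟮ζ⟯ * ∏ i, finrank ℚ ℚ⟮r i⟯ :=
      (finrank_sup_le _ _).trans (Nat.mul_le_mul_left _ (finrank_biSup_le_prod _ _))
    _ ≤ L * L := Nat.mul_le_mul (finrank_adjoin_simple_le_of_pow_eq hL hζL)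
      (prod_le_prod' fun i _ => finrank_adjoin_simple_le_of_pow_eq (hd i) (hr i))
    _ = L ^ 2 := (sq L).symm

theorem sq_le_two_pow_of_four_le {s : ℕ} (hs : 4 ≤ s) : s ^ 2 ≤ 2 ^ s := by
  induction s, hs using Nat.le_induction with
  | base => norm_num
  | succ n hn ih =>
    calc (n + 1) ^ 2 ≤ 2 * n ^ 2 := by nlinarith
      _ ≤ 2 * 2 ^ n := by omega
      _ = 2 ^ (n + 1) := (pow_succ' 2 n).symm

theorem pow_le_two_pow_two_pow_cube {s k : ℕ} (hs : 4 ≤ s) (hk : k ≤ s) :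
    ((2 ^ s + 1) ^ k * (2 ^ 2 ^ s * (2 ^ s) ^ 2 ^ s)) ^ ((2 ^ s) ^ k) ^ 2 ≤ 2 ^ 2 ^ s ^ 3 := by
  have hsq := sq_le_two_pow_of_four_le hs
  have hbase : (2 ^ s + 1) ^ k * (2 ^ 2 ^ s * (2 ^ s) ^ 2 ^ s) ≤ 2 ^ (2 ^ s * 2 ^ s) :=
    calc _ ≤ (2 ^ (s + 1)) ^ s * (2 ^ 2 ^ s * (2 ^ s) ^ 2 ^ s) := by
          gcongr
          · exact Nat.one_le_two_pow
          · rw [pow_succ]; have := Nat.one_le_two_pow (n := s); omega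
      _ = 2 ^ ((s + 1) * s + (2 ^ s + s * 2 ^ s)) := by
          rw [← pow_mul, ← pow_mul, ← pow_add, ← pow_add]
      _ ≤ 2 ^ (2 ^ s * 2 ^ s) := by
          gcongr
          · norm_num
          · nlinarith
  have hexp : ((2 ^ s) ^ k) ^ 2 ≤ 2 ^ (2 * s ^ 2) := by
    rw [← pow_mul, ← pow_mul]
    exact Nat.pow_le_pow_right two_pos (by nlinarith [Nat.mul_le_mul_left s hk])
  calc _ ≤ (2 ^ (2 ^ s * 2 ^ s)) ^ 2 ^ (2 * s ^ 2) := by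
        gcongr
        · exact Nat.one_le_two_pow
    _ = 2 ^ 2 ^ (2 * s + 2 * s ^ 2) := by
        rw [← pow_mul, ← pow_add, ← pow_add]
        ring_nf
    _ ≤ 2 ^ 2 ^ s ^ 3 := by
        gcongr
        · norm_num
        · norm_num
        · nlinarith

theorem norm_bound_of_circuit_value_general
    (s : ℕ) (hs : 4 ≤ s) (k : ℕ) (hk : k ≤ s)
    (a d : Fin k → ℕ)
    (ha : ∀ i, 0 < a i) (hd : ∀ i, 0 < d i)
    (hab : ∀ i, a i ≤ 2 ^ s) (hdb : ∀ i, d i ≤ 2 ^ s)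
    (K : IntermediateField ℚ ℂ)
    (hK : K = IntermediateField.adjoin ℚ
      ((∏ i : Fin k, (X ^ (d i) - C ((a i : ℚ)))).rootSet ℂ))
    (f : MvPolynomial (Fin k) ℤ)
    (hdeg : f.totalDegree ≤ 2 ^ s)
    (hcoeff : ∀ m : Fin k →₀ ℕ, |f.coeff m| ≤ 2 ^ (2 ^ s))
    (x : K)
    (hx : (x : ℂ) =
      MvPolynomial.aeval (fun i : Fin k => (((a i : ℝ) ^ ((d i : ℝ)⁻¹) : ℝ) : ℂ)) f) :
    |Algebra.norm ℚ x| ≤ (2 : ℚ) ^ (2 ^ (s ^ 3)) := by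
  have hd0 : ∀ i, d i ≠ 0 := fun i => (hd i).ne'
  set r : Fin k → ℂ := fun i => (((a i : ℝ) ^ ((d i : ℝ)⁻¹) : ℝ) : ℂ)
  have hr : ∀ i, r i ^ d i = algebraMap ℚ ℂ (a i : ℚ) := fun i => by
    simp only [r, ← Complex.ofReal_pow, Real.rpow_inv_natCast_pow (Nat.cast_nonneg _) (hd0 i)]
    simp
  have hrK : ∀ i, r i ∈ K := fun i =>
    hK ▸ subset_adjoin ℚ _ ((mem_rootSet_prod_X_pow_sub_C_iff hd0).2 ⟨i, hr i⟩)
  have : FiniteDimensional ℚ K := hK ▸ finiteDimensional_adjoin fun _ hz =>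
    (isAlgebraic_of_mem_rootSet hz).isIntegral
  have hconj : ∀ σ : K →ₐ[ℚ] ℂ,
      ‖σ x‖ ≤ (((2 ^ s + 1) ^ k * (2 ^ 2 ^ s * (2 ^ s) ^ 2 ^ s) : ℕ) : ℝ) := fun σ => by
    rw [algHom_apply_eq_aeval hrK hx]
    refine (MvPolynomial.norm_aeval_le (B := 2 ^ s) _ hdeg hcoeff (one_le_pow₀ one_le_two)
      fun i => ?_).trans_eq (by push_cast [Fintype.card_fin]; rfl)
    refine (σ.norm_apply_le_of_pow_eq (hd0 i) (Subtype.ext (hr i))).trans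
      (max_le (one_le_pow₀ one_le_two) ?_)
    simpa using (Nat.cast_le (α := ℝ)).2 (hab i)
  have hfinrank : finrank ℚ K ≤ ((2 ^ s) ^ k) ^ 2 := by
    rw [hK]
    refine (finrank_adjoin_rootSet_prod_X_pow_sub_C_le hd0 fun i => ?_).trans ?_
    · exact_mod_cast (ha i).ne'
    · gcongr
      simpa using prod_le_pow_card univ d (2 ^ s) fun i _ => hdb i
  have hreal : |(Algebra.norm ℚ x : ℝ)| ≤ 2 ^ 2 ^ s ^ 3 :=
    calc _ ≤ _ := abs_norm_le_pow_finrank hconj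
      _ ≤ _ := pow_le_pow_right₀ (Nat.one_le_cast.2 (Nat.one_le_iff_ne_zero.2 (by positivity)))
          hfinrank
      _ ≤ 2 ^ 2 ^ s ^ 3 := by exact_mod_cast pow_le_two_pow_two_pow_cube hs hk
  exact_mod_cast hreal

/-- Bound on the norm of the value of a polynomial of total degree
at most `2^s` with coefficients of magnitude at most `2^(2^s)` at radicals
`ᵈ¹√a₁, …, ᵈᵏ√a_k` with `k ≤ s`, `aᵢ, dᵢ ≤ 2^s`, inside the splitting field `K` of
`∏ i, (X ^ dᵢ - aᵢ)`: the norm has absolute value at most `2^(2^(s³))`. -/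
theorem norm_bound_of_circuit_value
    (s : ℕ) (hs : 4 ≤ s) (k : ℕ) (hk : k ≤ s)
    (a d : Fin k → ℕ)
    (ha : ∀ i, 0 < a i) (hd : ∀ i, 0 < d i)
    (hab : ∀ i, a i ≤ 2 ^ s) (hdb : ∀ i, d i ≤ 2 ^ s)
    (hcop : ∀ i j, i ≠ j → Nat.Coprime (a i) (a j))
    (hirr : ∀ i, Irreducible (X ^ (d i) - C ((a i : ℚ))))
    (K : IntermediateField ℚ ℂ)
    (hK : K = IntermediateField.adjoin ℚ
      ((∏ i : Fin k, (X ^ (d i) - C ((a i : ℚ)))).rootSet ℂ))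
    (f : MvPolynomial (Fin k) ℤ)
    (hdeg : f.totalDegree ≤ 2 ^ s)
    (hcoeff : ∀ m : Fin k →₀ ℕ, |f.coeff m| ≤ 2 ^ (2 ^ s))
    (x : K)
    (hx : (x : ℂ) =
      MvPolynomial.aeval (fun i : Fin k => (((a i : ℝ) ^ ((d i : ℝ)⁻¹) : ℝ) : ℂ)) f) :
    |Algebra.norm ℚ x| ≤ (2 : ℚ) ^ (2 ^ (s ^ 3)) :=
  norm_bound_of_circuit_value_general s hs k hk a d ha hd hab hdb K hK f hdeg hcoeff x hx
end

section
/- Let α and β be algebraic numbers over ℚ of degrees m and n respectively. Then there exists an integer c with 1 ≤ c ≤ m²n² + 1 such that α + cβ is a primitive element of ℚ(α, β); that is, ℚ(α, β) = ℚ(α + cβ). -/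
/-!
Two embeddings `φ ≠ ψ` of `F⟮α, β⟯` that agree on `α + c • β` cannot agree on `β` (they would
then agree on `α` too), so `c = (φ α - ψ α) / (ψ β - φ β)` is a ratio of differences of conjugates
of `α` and of `β`. There are at most `(m n)²` such ratios, so among `m²n² + 1` integers some `c`
makes `φ ↦ φ (α + c • β)` injective, which for a separable extension means `α + c • β` is primitive.
-/

open IntermediateField Polynomial

namespace IntermediateField

variable {F E L : Type*} [Field F] [Field E] [Field L] [Algebra F E] [Algebra F L]

theorem eq_adjoin_simple_of_injective_algHom_apply [IsAlgClosed L] (K : IntermediateField F E)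
    [FiniteDimensional F K] [Algebra.IsSeparable F K] (x : K)
    (hx : Function.Injective fun φ : K →ₐ[F] L ↦ φ x) : K = F⟮(x : E)⟯ := by
  have htop : F⟮x⟯ = ⊤ :=
    (Field.primitive_element_iff_algHom_eq_of_eval' F L (fun _ ↦ IsAlgClosed.splits _) x).mpr hx
  simpa [lift_adjoin_simple] using congr_arg lift htop.symm

theorem algHom_apply_mem_aroots_minpoly {K : IntermediateField F E} (φ : K →ₐ[F] L) {x : E}
    (hx : IsIntegral F x) (hxK : x ∈ K) : φ ⟨x, hxK⟩ ∈ (minpoly F x).aroots L := by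
  refine mem_aroots.mpr ⟨minpoly.ne_zero hx, ?_⟩
  rw [← minpoly_eq ⟨x, hxK⟩]
  exact minpoly.aeval_algHom _ φ _

variable (F L) in
open Classical in
-- A pair with `β₁ = β₂` contributes the junk ratio `0`, which only enlarges the set.
noncomputable def primitiveElementObstructions (α β : E) : Finset L :=
  letI roots := ((minpoly F α).aroots L).toFinset ×ˢ ((minpoly F β).aroots L).toFinset
  (roots ×ˢ roots).image fun ((α₁, β₁), (α₂, β₂)) ↦ (α₁ - α₂) / (β₂ - β₁)

theorem card_primitiveElementObstructions_le [IsAlgClosed L] (α β : E) :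
    (primitiveElementObstructions F L α β).card ≤
      ((minpoly F α).natDegree * (minpoly F β).natDegree) ^ 2 := by
  classical
  refine Finset.card_image_le.trans ?_
  simp only [Finset.card_product, sq]
  gcongr <;>
  · exact (Multiset.toFinset_card_le _).trans IsAlgClosed.card_aroots_eq_natDegree.le

theorem adjoin_pair_eq_adjoin_add_smul [IsAlgClosed L] {α β : E} (hα : IsSeparable F α)
    (hβ : IsSeparable F β) {c : F}
    (hc : algebraMap F L c ∉ primitiveElementObstructions F L α β) :
    F⟮α, β⟯ = F⟮α + c • β⟯ := by
  classical
  have := finiteDimensional_adjoin_pair hα.isIntegral hβ.isIntegral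
  have := isSeparable_adjoin_pair_of_isSeparable F E hα hβ
  have hαK : α ∈ F⟮α, β⟯ := subset_adjoin F _ (by simp)
  have hβK : β ∈ F⟮α, β⟯ := subset_adjoin F _ (by simp)
  set a : F⟮α, β⟯ := ⟨α, hαK⟩
  set b : F⟮α, β⟯ := ⟨β, hβK⟩
  refine eq_adjoin_simple_of_injective_algHom_apply (L := L) _ (a + c • b) fun φ ψ hφψ ↦ ?_
  have hφψ' : φ a + c • φ b = ψ a + c • ψ b := by simpa using hφψ
  suffices hb : φ b = ψ b by
    refine adjoin_algHom_ext F ?_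
    rintro x (rfl | rfl)
    · simpa [hb] using hφψ'
    · exact hb
  by_contra hb
  refine hc (Finset.mem_image.mpr ⟨((φ a, φ b), (ψ a, ψ b)), ?_, ?_⟩)
  · simp only [Finset.mem_product, Multiset.mem_toFinset]
    exact ⟨⟨algHom_apply_mem_aroots_minpoly φ hα.isIntegral hαK,
      algHom_apply_mem_aroots_minpoly φ hβ.isIntegral hβK⟩,
      algHom_apply_mem_aroots_minpoly ψ hα.isIntegral hαK,
      algHom_apply_mem_aroots_minpoly ψ hβ.isIntegral hβK⟩
  · show (φ a - ψ a) / (ψ b - φ b) = _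
    rw [div_eq_iff (sub_ne_zero.mpr (Ne.symm hb))]
    rw [Algebra.smul_def, Algebra.smul_def] at hφψ'
    linear_combination hφψ'

end IntermediateField

/-- (Effective primitive element theorem.) If `α` and `β` are
algebraic numbers of degrees `m` and `n` over `ℚ`, then there is an integer `c`
with `1 ≤ c ≤ m²n² + 1` such that `ℚ(α, β) = ℚ(α + cβ)`. -/
theorem effective_primitive_element
    (α β : ℂ) (hα : IsAlgebraic ℚ α) (hβ : IsAlgebraic ℚ β)
    (m n : ℕ) (hm : (minpoly ℚ α).natDegree = m) (hn : (minpoly ℚ β).natDegree = n) :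
    ∃ c : ℤ, 1 ≤ c ∧ c ≤ (m : ℤ) ^ 2 * (n : ℤ) ^ 2 + 1 ∧
      IntermediateField.adjoin ℚ {α, β} =
        IntermediateField.adjoin ℚ {α + (c : ℂ) * β} := by
  classical
  have hsep {x : ℂ} (hx : IsAlgebraic ℚ x) : IsSeparable ℚ x :=
    (minpoly.irreducible hx.isIntegral).separable
  set candidates := (Finset.Icc 1 ((m : ℤ) ^ 2 * n ^ 2 + 1)).image (Int.cast : ℤ → ℂ)
  have hcard : (primitiveElementObstructions ℚ ℂ α β).card < candidates.card := by
    have hbound := card_primitiveElementObstructions_le (F := ℚ) (L := ℂ) α β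
    rw [hm, hn] at hbound
    rw [Finset.card_image_of_injective _ Int.cast_injective, Int.card_Icc, add_sub_cancel_right,
      show (m : ℤ) ^ 2 * n ^ 2 + 1 = ((m * n) ^ 2 + 1 : ℕ) by push_cast; ring, Int.toNat_natCast]
    omega
  obtain ⟨_, hmem, hc⟩ := Finset.exists_mem_notMem_of_card_lt_card hcard
  obtain ⟨c, hcI, rfl⟩ := Finset.mem_image.mp hmem
  obtain ⟨hc₁, hc₂⟩ := Finset.mem_Icc.mp hcI
  refine ⟨c, hc₁, hc₂, ?_⟩
  have := adjoin_pair_eq_adjoin_add_smul (L := ℂ) (hsep hα) (hsep hβ) (c := (c : ℚ))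
    (by rwa [map_intCast])
  rwa [Rat.smul_def, Rat.cast_intCast] at this
end

section
/- Let s be a positive integer, let k ≤ s, and let a_1,…,a_k be pairwise coprime positive integers and d_1,…,d_k positive integers, all of magnitude at most 2^s, such that for each i the polynomial X^{d_i} − a_i is irreducible over ℚ. Let d = lcm(d_1,…,d_k), ζ_d = e^{2πi/d}, and K = ℚ(d_1√a_1, …, d_k√a_k, ζ_d). Then there exist nonnegative integers c_0, c_1, …, c_k, each at most 2^{4s²}, such that θ = c_0 ζ_d + Σ_{i=1}^k c_i · d_i√a_i is a primitive element of K, i.e. K = ℚ(θ); moreover the degree of θ over ℚ is at most 2^{2s²}. -/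
/-!
Each generator of `K` is a root of `X ^ dᵢ - aᵢ` or of `X ^ D - 1`, so
`n = [K : ℚ] ≤ D ∏ dᵢ ≤ 2^(2s²)`. For generators `g_j` of `K`, the element `θ = ∑ c_j g_j`
generates `K` iff the `n` embeddings `K → ℂ` take pairwise distinct values at `θ`, i.e. iff `c`
is not a zero of `P = ∏_{σ ≠ τ} ∑_j (σ g_j - τ g_j) X_j`. Distinct embeddings differ on some
generator, so `P ≠ 0`; and `P` has degree at most `n² ≤ 2^(4s²)` in each variable, so by the
combinatorial Nullstellensatz it does not vanish on all of `{0, …, 2^(4s²)}^(k+1)`.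
-/

open Polynomial IntermediateField

namespace MvPolynomial

theorem exists_natCast_eval_ne_zero {σ R : Type*} [Finite σ] [CommRing R] [IsDomain R]
    [CharZero R] {P : MvPolynomial σ R} (hP : P ≠ 0) {N : ℕ} (hdeg : ∀ i, P.degreeOf i ≤ N) :
    ∃ c : σ → ℕ, (∀ i, c i ≤ N) ∧ eval (fun i ↦ (c i : R)) P ≠ 0 := by
  classical
  let S : Finset R := (Finset.range (N + 1)).image Nat.cast
  have hS : S.card = N + 1 := by
    rw [Finset.card_image_of_injective _ Nat.cast_injective, Finset.card_range]
  by_contra! h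
  refine hP (eq_zero_of_eval_zero_at_prod_finset P (fun _ ↦ S)
    (fun i ↦ hS ▸ Nat.lt_succ_of_le (hdeg i)) fun x hx ↦ ?_)
  choose c hcN hc using fun i ↦ Finset.mem_image.mp (hx i)
  have hx : x = fun i ↦ (c i : R) := by funext i; exact (hc i).symm
  exact hx ▸ h c fun i ↦ Nat.lt_succ_iff.mp (Finset.mem_range.mp (hcN i))

theorem degreeOf_prod_sum_C_mul_X_le {σ ι R : Type*} [CommSemiring R] [Fintype σ]
    (s : Finset ι) (v : ι → σ → R) (i : σ) :
    (∏ p ∈ s, ∑ j, C (v p j) * X j).degreeOf i ≤ s.card := by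
  classical
  have hlin (p : ι) : (∑ j, C (v p j) * X j : MvPolynomial σ R).degreeOf i ≤ 1 := by
    refine (degreeOf_sum_le i _ _).trans
      (Finset.sup_le fun j _ ↦ (degreeOf_C_mul_le _ i _).trans ?_)
    rcases subsingleton_or_nontrivial R with _ | _
    · rw [Subsingleton.elim (X j) 0, degreeOf_zero]; omega
    · rw [degreeOf_X]; split_ifs <;> omega
  calc (∏ p ∈ s, ∑ j, C (v p j) * X j).degreeOf i
      ≤ ∑ p ∈ s, (∑ j, C (v p j) * X j : MvPolynomial σ R).degreeOf i := degreeOf_prod_le i s _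
    _ ≤ ∑ _p ∈ s, 1 := Finset.sum_le_sum fun p _ ↦ hlin p
    _ = s.card := by rw [Finset.sum_const, smul_eq_mul, mul_one]

end MvPolynomial

theorem AlgHom.exists_natCast_sum_eval_injective {F E L ι : Type*} [CommSemiring F] [Semiring E]
    [CommRing L] [IsDomain L] [CharZero L] [Algebra F E] [Algebra F L] [Fintype ι]
    [Fintype (E →ₐ[F] L)] (g : ι → E)
    (hg : ∀ φ ψ : E →ₐ[F] L, (∀ i, φ (g i) = ψ (g i)) → φ = ψ)
    {N : ℕ} (hN : Fintype.card (E →ₐ[F] L) ^ 2 ≤ N) :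
    ∃ c : ι → ℕ, (∀ i, c i ≤ N) ∧
      Function.Injective fun φ : E →ₐ[F] L ↦ φ (∑ i, (c i : E) * g i) := by
  classical
  let P : MvPolynomial ι L := ∏ p ∈ (Finset.univ : Finset (E →ₐ[F] L)).offDiag,
    ∑ i, MvPolynomial.C (p.1 (g i) - p.2 (g i)) * MvPolynomial.X i
  have hP : P ≠ 0 := by
    refine Finset.prod_ne_zero_iff.mpr fun p hp h ↦ ?_
    obtain ⟨-, -, hne⟩ := Finset.mem_offDiag.mp hp
    obtain ⟨i, hi⟩ : ∃ i, p.1 (g i) ≠ p.2 (g i) := by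
      by_contra! h'
      exact hne (hg _ _ h')
    have := congrArg (MvPolynomial.eval (Pi.single i 1)) h
    simp [Pi.single_apply, sub_eq_zero, hi] at this
  have hPdeg (i : ι) : P.degreeOf i ≤ N := calc
    P.degreeOf i ≤ (Finset.univ : Finset (E →ₐ[F] L)).offDiag.card :=
      MvPolynomial.degreeOf_prod_sum_C_mul_X_le _ _ i
    _ ≤ N := by
      rw [Finset.offDiag_card, Finset.card_univ, ← sq]
      exact Nat.sub_le_of_le_add (by omega)
  obtain ⟨c, hcN, hc⟩ := MvPolynomial.exists_natCast_eval_ne_zero hP hPdeg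
  refine ⟨c, hcN, fun φ ψ h ↦ ?_⟩
  by_contra hne
  apply hc
  rw [map_prod]
  refine Finset.prod_eq_zero (i := (φ, ψ)) (by simp [hne]) ?_
  simpa [map_sum, sub_mul, mul_comm _ (c _ : L), Finset.sum_sub_distrib, sub_eq_zero] using h

theorem minpoly.natDegree_le_of_pow_eq_algebraMap {F A : Type*} [Field F] [Ring A] [Algebra F A]
    {x : A} {n : ℕ} (hn : 0 < n) {a : F} (h : x ^ n = algebraMap F A a) :
    (minpoly F x).natDegree ≤ n :=
  natDegree_le_of_degree_le ((minpoly.degree_le_of_ne_zero F x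
    (X_pow_sub_C_ne_zero hn a) (by simp [h])).trans (degree_X_pow_sub_C hn a).le)

namespace IntermediateField

variable {F L : Type*} [Field F] [Field L] [Algebra F L]

theorem finrank_adjoin_range_le_prod {ι : Type*} [Fintype ι] (g : ι → L)
    (hg : ∀ i, IsIntegral F (g i)) :
    Module.finrank F (adjoin F (Set.range g)) ≤ ∏ i, (minpoly F (g i)).natDegree := by
  classical
  suffices ∀ s : Finset ι,
      Module.finrank F (adjoin F (g '' s)) ≤ ∏ i ∈ s, (minpoly F (g i)).natDegree by
    rw [← Set.image_univ, ← Finset.coe_univ]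
    exact this Finset.univ
  intro s
  induction s using Finset.induction_on with
  | empty =>
    rw [Finset.coe_empty, Set.image_empty, adjoin_empty, IntermediateField.finrank_bot,
      Finset.prod_empty]
  | insert i s hi ih =>
    rw [Finset.coe_insert, Set.image_insert_eq, Set.insert_eq, adjoin_union,
      Finset.prod_insert hi]
    calc Module.finrank F ↥(F⟮g i⟯ ⊔ adjoin F (g '' s))
        ≤ Module.finrank F F⟮g i⟯ * Module.finrank F (adjoin F (g '' s)) := finrank_sup_le _ _
      _ ≤ _ := Nat.mul_le_mul (adjoin.finrank (hg i)).le ih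

section Radicals

variable {ι : Type*} [Fintype ι] (g : ι → L) (e : ι → ℕ)

theorem finiteDimensional_adjoin_range_of_pow_eq_algebraMap (he : ∀ i, 0 < e i)
    (hg : ∀ i, ∃ q : F, g i ^ e i = algebraMap F L q) :
    FiniteDimensional F (adjoin F (Set.range g)) := by
  refine finiteDimensional_adjoin ?_
  rintro _ ⟨i, rfl⟩
  obtain ⟨q, hq⟩ := hg i
  exact (hq ▸ isIntegral_algebraMap).of_pow (he i)

theorem finrank_adjoin_range_le_prod_of_pow_eq_algebraMap (he : ∀ i, 0 < e i)
    (hg : ∀ i, ∃ q : F, g i ^ e i = algebraMap F L q) :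
    Module.finrank F (adjoin F (Set.range g)) ≤ ∏ i, e i := by
  choose q hq using hg
  refine (finrank_adjoin_range_le_prod g fun i ↦ ?_).trans
    (Finset.prod_le_prod' fun i _ ↦ minpoly.natDegree_le_of_pow_eq_algebraMap (he i) (hq i))
  exact (hq i ▸ isIntegral_algebraMap).of_pow (he i)

end Radicals

theorem natDegree_minpoly_eq_finrank_of_adjoin_simple_eq {K : IntermediateField F L}
    [FiniteDimensional F K] {x : L} (h : F⟮x⟯ = K) :
    (minpoly F x).natDegree = Module.finrank F K := by
  have hx : x ∈ K := h ▸ mem_adjoin_simple_self F x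
  rw [← adjoin.finrank (isIntegral_iff.mp (IsIntegral.of_finite F (⟨x, hx⟩ : K))), h]

theorem exists_natCast_sum_primitive_element [IsAlgClosed L] [CharZero L] {ι : Type*}
    [Fintype ι] {K : IntermediateField F L} [FiniteDimensional F K] [Algebra.IsSeparable F K]
    (g : ι → L) (hK : K = adjoin F (Set.range g)) {N : ℕ} (hN : Module.finrank F K ^ 2 ≤ N) :
    ∃ c : ι → ℕ, (∀ i, c i ≤ N) ∧ F⟮∑ i, (c i : L) * g i⟯ = K := by
  let gK : ι → K := fun i ↦ ⟨g i, hK ▸ subset_adjoin F _ (Set.mem_range_self i)⟩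
  have hsep (φ ψ : K →ₐ[F] L) (h : ∀ i, φ (gK i) = ψ (gK i)) : φ = ψ :=
    algHom_ext_of_eq_adjoin F hK (by rintro _ ⟨i, rfl⟩; exact h i)
  obtain ⟨c, hcN, hinj⟩ :=
    AlgHom.exists_natCast_sum_eval_injective gK hsep (N := N) (by rwa [AlgHom.card])
  have htop : F⟮∑ i, (c i : K) * gK i⟯ = ⊤ :=
    (Field.primitive_element_iff_algHom_eq_of_eval' F L (fun _ ↦ IsAlgClosed.splits _) _).mpr hinj
  refine ⟨c, hcN, ?_⟩
  simpa [gK] using congrArg lift htop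

end IntermediateField

theorem Complex.ofReal_rpow_inv_natCast_pow {x : ℝ} (hx : 0 ≤ x) {n : ℕ} (hn : n ≠ 0) :
    ((x ^ (n⁻¹ : ℝ) : ℝ) : ℂ) ^ n = x := by
  rw [← Complex.ofReal_pow, Real.rpow_inv_natCast_pow hx hn]

theorem lcm_mul_prod_le_two_pow {ι : Type*} [Fintype ι] {s : ℕ} (hι : Fintype.card ι ≤ s)
    (d : ι → ℕ) (hd : ∀ i, 0 < d i) (hdb : ∀ i, d i ≤ 2 ^ s) :
    Finset.univ.lcm d * ∏ i, d i ≤ 2 ^ (2 * s ^ 2) := by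
  have hprod : ∏ i, d i ≤ 2 ^ (s * s) := calc
    ∏ i, d i ≤ (2 ^ s) ^ Fintype.card ι := Finset.prod_le_pow_card _ _ _ fun i _ ↦ hdb i
    _ ≤ 2 ^ (s * s) := by
      rw [← pow_mul]
      exact Nat.pow_le_pow_right two_pos (Nat.mul_le_mul_left s hι)
  calc Finset.univ.lcm d * ∏ i, d i ≤ (∏ i, d i) * ∏ i, d i :=
        Nat.mul_le_mul_right _
          (Nat.le_of_dvd (Finset.prod_pos fun i _ ↦ hd i) (Finset.lcm_dvd_prod _ _))
    _ ≤ 2 ^ (s * s) * 2 ^ (s * s) := Nat.mul_le_mul hprod hprod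
    _ = 2 ^ (2 * s ^ 2) := by ring

theorem primitive_element_of_radical_field_general
    (s : ℕ) (k : ℕ) (hk : k ≤ s)
    (a d : Fin k → ℕ)
    (hd : ∀ i, 0 < d i)
    (hdb : ∀ i, d i ≤ 2 ^ s)
    (D : ℕ) (hD : D = Finset.univ.lcm d)
    (ζ : ℂ) (hζ : ζ = Complex.exp (2 * Real.pi * Complex.I / (D : ℂ)))
    (K : IntermediateField ℚ ℂ)
    (hK : K = IntermediateField.adjoin ℚ
      ((Set.range fun i : Fin k => (((a i : ℝ) ^ ((d i : ℝ)⁻¹) : ℝ) : ℂ)) ∪ {ζ})) :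
    ∃ (c₀ : ℕ) (c : Fin k → ℕ),
      c₀ ≤ 2 ^ (4 * s ^ 2) ∧ (∀ i, c i ≤ 2 ^ (4 * s ^ 2)) ∧
      IntermediateField.adjoin ℚ
          {(c₀ : ℂ) * ζ + ∑ i : Fin k, (c i : ℂ) * (((a i : ℝ) ^ ((d i : ℝ)⁻¹) : ℝ) : ℂ)} = K ∧
      (minpoly ℚ ((c₀ : ℂ) * ζ +
          ∑ i : Fin k, (c i : ℂ) * (((a i : ℝ) ^ ((d i : ℝ)⁻¹) : ℝ) : ℂ))).natDegree
        ≤ 2 ^ (2 * s ^ 2) := by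
  set α : Fin k → ℂ := fun i ↦ (((a i : ℝ) ^ ((d i : ℝ)⁻¹) : ℝ) : ℂ)
  let g : Option (Fin k) → ℂ := fun o ↦ o.elim ζ α
  let e : Option (Fin k) → ℕ := fun o ↦ o.elim D d
  have hDpos : 0 < D :=
    Nat.pos_of_ne_zero (hD ▸ Finset.lcm_ne_zero_iff.mpr fun i _ ↦ (hd i).ne')
  have he (o : Option (Fin k)) : 0 < e o := by cases o; exacts [hDpos, hd _]
  have hg : ∀ o, ∃ q : ℚ, g o ^ e o = algebraMap ℚ ℂ q := by
    rintro (_ | i)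
    · refine ⟨1, ?_⟩
      rw [map_one, show g none = ζ from rfl, hζ]
      exact (Complex.isPrimitiveRoot_exp D hDpos.ne').pow_eq_one
    · refine ⟨a i, ?_⟩
      simpa [g, e, α] using Complex.ofReal_rpow_inv_natCast_pow (a i).cast_nonneg (hd i).ne'
  have hKg : K = adjoin ℚ (Set.range g) := by rw [hK, Option.range_elim, Set.union_singleton]
  have : FiniteDimensional ℚ K :=
    hKg ▸ finiteDimensional_adjoin_range_of_pow_eq_algebraMap g e he hg
  have hrank : Module.finrank ℚ K ≤ 2 ^ (2 * s ^ 2) := calc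
    Module.finrank ℚ K ≤ ∏ o, e o :=
      hKg ▸ finrank_adjoin_range_le_prod_of_pow_eq_algebraMap g e he hg
    _ = D * ∏ i, d i := Fintype.prod_option e
    _ ≤ 2 ^ (2 * s ^ 2) := hD ▸ lcm_mul_prod_le_two_pow (by rwa [Fintype.card_fin]) d hd hdb
  obtain ⟨c, hcN, hθ⟩ := exists_natCast_sum_primitive_element g hKg (N := 2 ^ (4 * s ^ 2))
    (by rw [show 4 * s ^ 2 = 2 * s ^ 2 * 2 by ring, pow_mul]; gcongr)
  have hθg : ∑ o, (c o : ℂ) * g o = (c none : ℂ) * ζ + ∑ i, (c (some i) : ℂ) * α i :=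
    Fintype.sum_option _
  refine ⟨c none, fun i ↦ c (some i), hcN _, fun i ↦ hcN _, hθg ▸ hθ, ?_⟩
  exact (natDegree_minpoly_eq_finrank_of_adjoin_simple_eq (hθg ▸ hθ)).trans_le hrank

/-- For the field `K = ℚ(ᵈ¹√a₁, …, ᵈᵏ√a_k, ζ_d)` with
`d = lcm(d₁,…,d_k)` and all data of magnitude at most `2^s`, `k ≤ s`, there is a
primitive element `θ = c₀ζ_d + Σᵢ cᵢ ᵈⁱ√aᵢ` with nonnegative integer coefficients
`cᵢ ≤ 2^(4s²)`, whose degree over `ℚ` is at most `2^(2s²)`. -/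
theorem primitive_element_of_radical_field
    (s : ℕ) (hs : 0 < s) (k : ℕ) (hk : k ≤ s)
    (a d : Fin k → ℕ)
    (ha : ∀ i, 0 < a i) (hd : ∀ i, 0 < d i)
    (hab : ∀ i, a i ≤ 2 ^ s) (hdb : ∀ i, d i ≤ 2 ^ s)
    (hcop : ∀ i j, i ≠ j → Nat.Coprime (a i) (a j))
    (hirr : ∀ i, Irreducible (X ^ (d i) - C ((a i : ℚ))))
    (D : ℕ) (hD : D = Finset.univ.lcm d)
    (ζ : ℂ) (hζ : ζ = Complex.exp (2 * Real.pi * Complex.I / (D : ℂ)))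
    (K : IntermediateField ℚ ℂ)
    (hK : K = IntermediateField.adjoin ℚ
      ((Set.range fun i : Fin k => (((a i : ℝ) ^ ((d i : ℝ)⁻¹) : ℝ) : ℂ)) ∪ {ζ})) :
    ∃ (c₀ : ℕ) (c : Fin k → ℕ),
      c₀ ≤ 2 ^ (4 * s ^ 2) ∧ (∀ i, c i ≤ 2 ^ (4 * s ^ 2)) ∧
      IntermediateField.adjoin ℚ
          {(c₀ : ℂ) * ζ + ∑ i : Fin k, (c i : ℂ) * (((a i : ℝ) ^ ((d i : ℝ)⁻¹) : ℝ) : ℂ)} = K ∧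
      (minpoly ℚ ((c₀ : ℂ) * ζ +
          ∑ i : Fin k, (c i : ℂ) * (((a i : ℝ) ^ ((d i : ℝ)⁻¹) : ℝ) : ℂ))).natDegree
        ≤ 2 ^ (2 * s ^ 2) :=
  primitive_element_of_radical_field_general s k hk a d hd hdb D hD ζ hζ K hK
end

section
/- Let p_1, …, p_s be distinct rational primes, f_1, …, f_s positive integers, and m = ∏_{l=1}^s p_l^{f_l}. Let d and e be positive integers. Then the positive real number m^{e/d} (the e-th power of the positive real d-th root of m) is a rational integer if and only if d divides e · gcd(f_1, …, f_s). -/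
/-!
Put `x = ᵈ√m`. Since `x ^ e ≥ 0` and `(x ^ e) ^ d = m ^ e`, the number `x ^ e` is an integer
exactly when `m ^ e = ∏ l, p_l ^ (e f_l)` is the `d`-th power of a natural number. By unique
factorization this happens iff `d` divides every exponent `e f_l`, that is,
iff `d ∣ gcd_l (e f_l) = e · gcd_l f_l`.
-/

namespace Nat

variable {ι : Type*} [Fintype ι] {p : ι → ℕ}

theorem factorization_prod_pow_apply (hp : ∀ l, (p l).Prime) (hinj : Function.Injective p)
    (g : ι → ℕ) (l : ι) : (∏ i, p i ^ g i).factorization (p l) = g l := by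
  rw [factorization_prod fun i _ => pow_ne_zero _ (hp i).ne_zero, Finsupp.finsetSum_apply,
    Finset.sum_eq_single l]
  · simp [(hp l).factorization_pow]
  · intro i _ hil
    simp [(hp i).factorization_pow, hinj.ne hil]
  · simp

theorem exists_pow_eq_prod_pow_iff (hp : ∀ l, (p l).Prime) (hinj : Function.Injective p)
    (d : ℕ) (g : ι → ℕ) : (∃ N : ℕ, N ^ d = ∏ l, p l ^ g l) ↔ ∀ l, d ∣ g l := by
  constructor
  · rintro ⟨N, hN⟩ l
    have hfac := congrArg (fun n => n.factorization (p l)) hN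
    simp only [factorization_pow, Finsupp.smul_apply, smul_eq_mul,
      factorization_prod_pow_apply hp hinj] at hfac
    exact ⟨_, hfac.symm⟩
  · intro hdvd
    refine ⟨∏ l, p l ^ (g l / d), ?_⟩
    rw [← Finset.prod_pow]
    exact Finset.prod_congr rfl fun l _ => by rw [← pow_mul, Nat.div_mul_cancel (hdvd l)]

end Nat

theorem exists_int_eq_rpow_inv_pow_iff (m : ℕ) {d : ℕ} (hd : d ≠ 0) (e : ℕ) :
    (∃ n : ℤ, ((m : ℝ) ^ (d : ℝ)⁻¹) ^ e = n) ↔ ∃ N : ℕ, N ^ d = m ^ e := by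
  set x := (m : ℝ) ^ (d : ℝ)⁻¹
  have hx : 0 ≤ x := by positivity
  have hxde : (x ^ e) ^ d = (m : ℝ) ^ e := by
    rw [← pow_mul, mul_comm, pow_mul, Real.rpow_inv_natCast_pow m.cast_nonneg hd]
  constructor
  · rintro ⟨n, hn⟩
    lift n to ℕ using by exact_mod_cast hn ▸ pow_nonneg hx e
    refine ⟨n, ?_⟩
    exact_mod_cast (congrArg (· ^ d) hn).symm.trans hxde
  · rintro ⟨N, hN⟩
    refine ⟨N, ?_⟩
    rw [Int.cast_natCast, ← pow_left_inj₀ (pow_nonneg hx e) N.cast_nonneg hd, hxde]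
    exact_mod_cast hN.symm

theorem radical_power_integer_iff_general
    (s : ℕ)
    (p : Fin s → ℕ) (hp : ∀ l, (p l).Prime) (hinj : Function.Injective p)
    (f : Fin s → ℕ)
    (m : ℕ) (hm : m = ∏ l : Fin s, p l ^ f l)
    (d e : ℕ) (hd : 0 < d) :
    (∃ n : ℤ, ((m : ℝ) ^ ((d : ℝ)⁻¹)) ^ e = (n : ℝ)) ↔
      d ∣ e * Finset.univ.gcd f := by
  have hme : m ^ e = ∏ l, p l ^ (e * f l) := by
    simp only [hm, ← Finset.prod_pow, ← pow_mul, mul_comm]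
  rw [exists_int_eq_rpow_inv_pow_iff m hd.ne' e, hme, Nat.exists_pow_eq_prod_pow_iff hp hinj,
    ← normalize_eq e, ← Finset.gcd_mul_left, Finset.dvd_gcd_iff]
  simp

/-- Let `m = ∏ l, p_l ^ f_l` with `p_1,…,p_s` distinct primes and
`f_l` positive, and let `d, e` be positive integers. The positive real number
`m^(e/d) = (ᵈ√m)^e` is a rational integer iff `d ∣ e * gcd(f_1,…,f_s)`. -/
theorem radical_power_integer_iff
    (s : ℕ) (hs : 0 < s)
    (p : Fin s → ℕ) (hp : ∀ l, (p l).Prime) (hinj : Function.Injective p)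
    (f : Fin s → ℕ) (hf : ∀ l, 0 < f l)
    (m : ℕ) (hm : m = ∏ l : Fin s, p l ^ f l)
    (d e : ℕ) (hd : 0 < d) (he : 0 < e) :
    (∃ n : ℤ, ((m : ℝ) ^ ((d : ℝ)⁻¹)) ^ e = (n : ℝ)) ↔
      d ∣ e * Finset.univ.gcd f :=
  radical_power_integer_iff_general s p hp hinj f m hm d e hd
end
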